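/- Let 0 < a < b and λ ∈ [0,1]. With H = 2ab/(a+b), A = (a+b)/2, G = √(ab), and L = (b−a)/(ln b − ln a), the following inequality holds: |(1−λ)·H + λ·A − G²/L| ≤ (ab(b−a)/2)·{ C₁(λ;a,b) + C₁(λ;b,a) }. -/

import Mathlib

/-!
Put `φₘ(x) = log x + m / x`, so that `φₘ' (x) = (x - m) / x²` and `φₘ` attains its minimum on
`(0, ∞)` at `x = m`. With `c = (a + b) / 2`, `m₁ = a + λ (b - a) / 2` and `m₂ = b - λ (b - a) / 2`,
the error `(1 - λ) H + λ A - G² / L`, multiplied by `b - a`, equals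
`-ab ((φ_{m₁}(c) - φ_{m₁}(a)) + (φ_{m₂}(b) - φ_{m₂}(c)))`. Since `φₘ(m)` is a lower bound,
`|φₘ(v) - φₘ(u)| ≤ (φₘ(u) - φₘ(m)) + (φₘ(v) - φₘ(m))`, and these two brackets are
`(b - a)² / 2` times `C₁(λ; a, b)` and `C₁(λ; b, a)`.
-/

open MeasureTheory Set

/-- `C₁(λ; u, ϑ)` from Theorem 2.2. -/
noncomputable def C1 (lam u v : ℝ) : ℝ :=
  (1 / (v - u) ^ 2) *
    (-4 + (lam * (v - u) + 2 * u) * (3 * u + v) / (u * (u + v))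
      + 2 * Real.log (2 * u * (u + v) / (2 * u + lam * (v - u)) ^ 2))

noncomputable def logAddDiv (m x : ℝ) : ℝ := Real.log x + m / x

lemma logAddDiv_self_le {m x : ℝ} (hm : 0 < m) (hx : 0 < x) :
    logAddDiv m m ≤ logAddDiv m x := by
  have h := Real.one_sub_inv_le_log_of_pos (div_pos hx hm)
  rw [inv_div, Real.log_div hx.ne' hm.ne'] at h
  unfold logAddDiv
  rw [div_self hm.ne']
  linarith

lemma abs_logAddDiv_sub_le {m u v : ℝ} (hm : 0 < m) (hu : 0 < u) (hv : 0 < v) :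
    |logAddDiv m v - logAddDiv m u| ≤
      logAddDiv m u + logAddDiv m v - 2 * logAddDiv m m := by
  have hmu := logAddDiv_self_le hm hu
  have hmv := logAddDiv_self_le hm hv
  rw [abs_sub_le_iff]
  constructor <;> linarith

lemma sq_sub_div_two_mul_C1 {lam u v : ℝ} (hu : 0 < u) (huv : 0 < u + v) (hne : u ≠ v)
    (hm : 0 < u + lam * (v - u) / 2) :
    (v - u) ^ 2 / 2 * C1 lam u v =
      logAddDiv (u + lam * (v - u) / 2) u + logAddDiv (u + lam * (v - u) / 2) ((u + v) / 2)
        - 2 * logAddDiv (u + lam * (v - u) / 2) (u + lam * (v - u) / 2) := by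
  set m := u + lam * (v - u) / 2 with hm_def
  have hvu : v - u ≠ 0 := sub_ne_zero.2 hne.symm
  have hlog : Real.log (2 * u * (u + v) / (2 * u + lam * (v - u)) ^ 2) =
      Real.log u + Real.log ((u + v) / 2) - 2 * Real.log m := by
    have hsplit : 2 * u * (u + v) / (2 * u + lam * (v - u)) ^ 2 = u * ((u + v) / 2) / m ^ 2 := by
      rw [hm_def]; field_simp
    rw [hsplit, Real.log_div (by positivity) (by positivity), Real.log_mul hu.ne' (by positivity),
      Real.log_pow]
    push_cast
    ring
  unfold C1 logAddDiv
  rw [hlog]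
  field_simp
  ring

lemma sub_mul_mean_sub_div_logMean_eq {a b : ℝ} (ha : 0 < a) (hb : 0 < b) (hne : a ≠ b) (lam : ℝ) :
    (b - a) * ((1 - lam) * (2 * a * b / (a + b)) + lam * ((a + b) / 2) -
      a * b / ((b - a) / (Real.log b - Real.log a))) =
      -(a * b) * ((logAddDiv (a + lam * (b - a) / 2) ((a + b) / 2) -
          logAddDiv (a + lam * (b - a) / 2) a) +
        (logAddDiv (b + lam * (a - b) / 2) b - logAddDiv (b + lam * (a - b) / 2) ((a + b) / 2))) := by
  have hba : b - a ≠ 0 := sub_ne_zero.2 hne.symm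
  have hlog : Real.log b - Real.log a ≠ 0 :=
    sub_ne_zero.2 fun h => hne (Real.log_injOn_pos ha hb h.symm)
  unfold logAddDiv
  field_simp
  ring

theorem prop_means1 (a b : ℝ) (ha : 0 < a) (hab : a < b)
    (lam : ℝ) (hlam : lam ∈ Icc (0:ℝ) 1) :
    |(1 - lam) * (2 * a * b / (a + b)) + lam * ((a + b) / 2) -
      Real.sqrt (a * b) ^ 2 / ((b - a) / (Real.log b - Real.log a))| ≤
      (a * b * (b - a) / 2) * (C1 lam a b + C1 lam b a) := by
  obtain ⟨hlam0, hlam1⟩ := hlam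
  have hb : 0 < b := ha.trans hab
  have hba : 0 < b - a := sub_pos.2 hab
  have hm₁ : 0 < a + lam * (b - a) / 2 := by nlinarith
  have hm₂ : 0 < b + lam * (a - b) / 2 := by nlinarith
  have hE := congrArg abs (sub_mul_mean_sub_div_logMean_eq ha hb hab.ne lam)
  rw [abs_mul, abs_of_pos hba] at hE
  rw [Real.sq_sqrt (by positivity), ← mul_le_mul_iff_of_pos_left hba, hE]
  set φ₁ := logAddDiv (a + lam * (b - a) / 2)
  set φ₂ := logAddDiv (b + lam * (a - b) / 2)
  set c := (a + b) / 2
  calc |-(a * b) * ((φ₁ c - φ₁ a) + (φ₂ b - φ₂ c))|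
      ≤ a * b * (|φ₁ c - φ₁ a| + |φ₂ b - φ₂ c|) := by
        rw [abs_mul, abs_neg, abs_of_pos (by positivity)]
        gcongr
        exact abs_add_le _ _
    _ ≤ a * b * ((φ₁ a + φ₁ c - 2 * φ₁ (a + lam * (b - a) / 2)) +
          (φ₂ c + φ₂ b - 2 * φ₂ (b + lam * (a - b) / 2))) := by
        gcongr
        · exact abs_logAddDiv_sub_le hm₁ ha (by positivity)
        · exact abs_logAddDiv_sub_le hm₂ (by positivity) hb
    _ = (b - a) * ((a * b * (b - a) / 2) * (C1 lam a b + C1 lam b a)) := by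
        have h₁ := sq_sub_div_two_mul_C1 ha (by positivity) hab.ne hm₁
        have h₂ := sq_sub_div_two_mul_C1 hb (by positivity) hab.ne' hm₂
        rw [add_comm b a] at h₂
        linear_combination (-(a * b)) * h₁ - a * b * h₂
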